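/- For the star K_{1,n−1} with n ≥ 3 vertices, the middle 3-rainbow domination number is γ*_{r3}(K_{1,n−1}) = n + 1. -/

import Mathlib

open SimpleGraph Finset

/-- A `k`-rainbow dominating function on a graph `H`. -/
def IsRDF {W : Type*} (H : SimpleGraph W) (k : ℕ) (f : W → Finset (Fin k)) : Prop :=
  ∀ w, f w = ∅ → ∀ c : Fin k, ∃ u, H.Adj w u ∧ c ∈ f u

/-- The weight of a rainbow dominating function. -/
noncomputable def rdfWeight {W : Type*} [Fintype W] {k : ℕ} (f : W → Finset (Fin k)) : ℕ :=
  ∑ w, (f w).card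

/-- The `k`-rainbow domination number of a graph. -/
noncomputable def rdn {W : Type*} [Fintype W] (H : SimpleGraph W) (k : ℕ) : ℕ :=
  sInf {n | ∃ f : W → Finset (Fin k), IsRDF H k f ∧ rdfWeight f = n}

/-- The middle graph of `G`, on vertex set `V(G) ⊕ E(G)`. -/
def middleGraph {V : Type*} (G : SimpleGraph V) : SimpleGraph (V ⊕ G.edgeSet) where
  Adj x y :=
    match x, y with
    | Sum.inl _, Sum.inl _ => False
    | Sum.inl v, Sum.inr e => v ∈ (e : Sym2 V)
    | Sum.inr e, Sum.inl v => v ∈ (e : Sym2 V)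
    | Sum.inr e, Sum.inr f => e ≠ f ∧ ∃ v, v ∈ (e : Sym2 V) ∧ v ∈ (f : Sym2 V)
  symm := ⟨by
    rintro (v | e) (w | f) h
    · exact h.elim
    · exact h
    · exact h
    · exact ⟨Ne.symm h.1, h.2.imp fun v hv => ⟨hv.2, hv.1⟩⟩⟩
  loopless := ⟨by
    rintro (v | e) h
    · exact h.elim
    · exact h.1 rfl⟩

/-- The middle `k`-rainbow domination number `γ*_{rk}(G)`. -/
noncomputable def mrdn {V : Type*} [Fintype V] (G : SimpleGraph V) (k : ℕ) : ℕ :=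
  letI := Classical.decEq V
  letI : DecidableRel G.Adj := fun _ _ => Classical.dec _
  rdn (middleGraph G) k

/-- The `k`-rainbow domatic number: the maximum size of a family of `k`-rainbow
dominating functions with `∑ i |f i v| ≤ k` for each vertex `v`. -/
noncomputable def rdomatic {W : Type*} (H : SimpleGraph W) (k : ℕ) : ℕ :=
  sSup {d | ∃ F : Fin d → W → Finset (Fin k), Function.Injective F ∧
    (∀ i, IsRDF H k (F i)) ∧ ∀ w, (∑ i, (F i w).card) ≤ k}

/-- The matching number `α'(G)`. -/
noncomputable def matchingNumber {V : Type*} [Fintype V] (G : SimpleGraph V) : ℕ :=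
  sSup {n | ∃ M : Finset (Sym2 V), ↑M ⊆ G.edgeSet ∧
    (∀ e ∈ M, ∀ f ∈ M, e ≠ f → ∀ v : V, ¬(v ∈ e ∧ v ∈ f)) ∧ M.card = n}

/-- The star `K_{1,m}` on `m+1` vertices, with center `0`. -/
def starGraph (m : ℕ) : SimpleGraph (Fin (m + 1)) :=
  fromEdgeSet {e | ∃ i : Fin (m + 1), e = s(0, i)}


/-!
In `M(K_{1,m})` the leaf `i` is adjacent only to its edge `eᵢ`, the centre is adjacent to every
edge, and the edges form a clique. An empty leaf forces all three colours onto its edge, so every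
pair `{i, eᵢ}` has weight at least `1`, giving `m`. The missing `2` comes from a pair of weight `3`
if some leaf is empty; otherwise from the centre and the edges: an empty centre forces weight `3`
on the edges, and if all edges are empty, an empty edge forces weight `3` on the centre and its
leaf. Putting all colours on one edge and one colour on every other leaf attains `m + 2`.
-/

section RainbowDomination

variable {W : Type*} {H : SimpleGraph W} {k : ℕ} {f : W → Finset (Fin k)}

theorem IsRDF.le_sum_card_of_eq_empty (hf : IsRDF H k f) {w : W} (hw : f w = ∅) (s : Finset W)
    (hs : ∀ u, H.Adj w u → u ∉ s → f u = ∅) : k ≤ ∑ u ∈ s, (f u).card := by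
  classical
  have hcover : (univ : Finset (Fin k)) ⊆ s.biUnion f := by
    intro c _
    obtain ⟨u, hwu, hcu⟩ := hf w hw c
    by_cases hu : u ∈ s
    · exact mem_biUnion.mpr ⟨u, hu, hcu⟩
    · simp [hs u hwu hu] at hcu
  calc k = (univ : Finset (Fin k)).card := (card_fin k).symm
    _ ≤ (s.biUnion f).card := card_le_card hcover
    _ ≤ ∑ u ∈ s, (f u).card := card_biUnion_le

theorem rdn_eq_of_isRDF_of_le [Fintype W] {n : ℕ} (hf : IsRDF H k f) (hfn : rdfWeight f = n)
    (hle : ∀ g, IsRDF H k g → n ≤ rdfWeight g) : rdn H k = n :=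
  IsLeast.csInf_eq ⟨⟨f, hf, hfn⟩, by rintro _ ⟨g, hg, rfl⟩; exact hle g hg⟩

end RainbowDomination

section MiddleGraph

variable {V : Type*} {G : SimpleGraph V}

@[simp] theorem middleGraph_adj_inl_inl {v w : V} : ¬ (middleGraph G).Adj (.inl v) (.inl w) := id

@[simp] theorem middleGraph_adj_inl_inr {v : V} {e : G.edgeSet} :
    (middleGraph G).Adj (.inl v) (.inr e) ↔ v ∈ (e : Sym2 V) := Iff.rfl

@[simp] theorem middleGraph_adj_inr_inl {e : G.edgeSet} {v : V} :
    (middleGraph G).Adj (.inr e) (.inl v) ↔ v ∈ (e : Sym2 V) := Iff.rfl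

end MiddleGraph

theorem card_add_le_sum_add_one {ι : Type*} [Fintype ι] {g : ι → ℕ} (hg : ∀ j, 1 ≤ g j) (i : ι) :
    Fintype.card ι + g i ≤ ∑ j, g j + 1 := by
  classical
  have hrest : (univ.erase i).card • 1 ≤ ∑ j ∈ univ.erase i, g j :=
    card_nsmul_le_sum _ _ _ fun j _ => hg j
  rw [← add_sum_erase _ _ (mem_univ i)]
  rw [card_erase_of_mem (mem_univ i), card_univ, smul_eq_mul, mul_one] at hrest
  have := Fintype.card_pos_iff.mpr ⟨i⟩
  omega

namespace starGraph

variable {m : ℕ}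

theorem mem_edgeSet {e : Sym2 (Fin (m + 1))} :
    e ∈ (_root_.starGraph m).edgeSet ↔ ∃ i : Fin m, e = s(0, i.succ) := by
  rw [_root_.starGraph, edgeSet_fromEdgeSet, Set.mem_sdiff, Set.mem_ofPred_eq]
  constructor
  · rintro ⟨⟨i, rfl⟩, hdiag⟩
    cases i using Fin.cases with
    | zero => exact absurd (Sym2.mk_isDiag_iff.mpr rfl) hdiag
    | succ i => exact ⟨i, rfl⟩
  · rintro ⟨i, rfl⟩
    exact ⟨⟨i.succ, rfl⟩, fun h => Fin.succ_ne_zero i (Sym2.mk_isDiag_iff.mp h).symm⟩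

def edge (i : Fin m) : (_root_.starGraph m).edgeSet := ⟨s(0, i.succ), mem_edgeSet.mpr ⟨i, rfl⟩⟩

theorem edge_injective : Function.Injective (edge (m := m)) := by
  intro i j h
  simpa [edge, Sym2.eq_iff, Fin.succ_ne_zero] using congrArg Subtype.val h

theorem edge_surjective : Function.Surjective (edge (m := m)) := by
  rintro ⟨e, he⟩
  obtain ⟨i, rfl⟩ := mem_edgeSet.mp he
  exact ⟨i, rfl⟩

@[simp] theorem edge_inj {i j : Fin m} : edge i = edge j ↔ i = j := edge_injective.eq_iff

theorem zero_mem_edge (e : (_root_.starGraph m).edgeSet) : (0 : Fin (m + 1)) ∈ (e : Sym2 _) := by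
  obtain ⟨i, rfl⟩ := edge_surjective e
  exact Sym2.mem_mk_left _ _

theorem eq_edge_of_adj_succ {i : Fin m} {u : Fin (m + 1) ⊕ (_root_.starGraph m).edgeSet}
    (h : (middleGraph (_root_.starGraph m)).Adj (.inl i.succ) u) : u = .inr (edge i) := by
  rcases u with v | e
  · exact absurd h middleGraph_adj_inl_inl
  · obtain ⟨j, rfl⟩ := edge_surjective e
    simp only [middleGraph_adj_inl_inr, edge, Sym2.mem_iff, Fin.succ_ne_zero, Fin.succ_inj,
      false_or] at h
    rw [h]

variable {f : Fin (m + 1) ⊕ (_root_.starGraph m).edgeSet → Finset (Fin 3)}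

theorem three_le_card_edge_of_leaf_eq_empty (hf : IsRDF (middleGraph (_root_.starGraph m)) 3 f)
    {i : Fin m} (hi : f (.inl i.succ) = ∅) : 3 ≤ (f (.inr (edge i))).card := by
  simpa using hf.le_sum_card_of_eq_empty hi {.inr (edge i)} fun u hu hus =>
    absurd (eq_edge_of_adj_succ hu) (by simpa using hus)

theorem one_le_card_leaf_add_card_edge (hf : IsRDF (middleGraph (_root_.starGraph m)) 3 f)
    (i : Fin m) : 1 ≤ (f (.inl i.succ)).card + (f (.inr (edge i))).card := by
  by_cases hi : f (.inl i.succ) = ∅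
  · have := three_le_card_edge_of_leaf_eq_empty hf hi
    omega
  · have := card_eq_zero.not.mpr hi
    omega

theorem three_le_card_center_add_card_leaf (hf : IsRDF (middleGraph (_root_.starGraph m)) 3 f)
    (hE : ∀ i, f (.inr (edge i)) = ∅) (i : Fin m) :
    3 ≤ (f (.inl 0)).card + (f (.inl i.succ)).card := by
  have hcover : ∀ u, (middleGraph (_root_.starGraph m)).Adj (.inr (edge i)) u →
      u ∉ ({.inl 0, .inl i.succ} : Finset _) → f u = ∅ := by
    rintro (v | e) hu hus
    · simp only [middleGraph_adj_inr_inl, edge, Sym2.mem_iff] at hu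
      simp_all
    · obtain ⟨j, rfl⟩ := edge_surjective e
      exact hE j
  have hne : (0 : Fin (m + 1)) ≠ i.succ := (Fin.succ_ne_zero i).symm
  simpa [sum_pair, hne] using hf.le_sum_card_of_eq_empty (hE i) _ hcover

def minRDF (x : Fin m) : Fin (m + 1) ⊕ (_root_.starGraph m).edgeSet → Finset (Fin 3) :=
  Sum.elim (fun v => if v = 0 ∨ v = x.succ then ∅ else {0})
    (fun e => if e = edge x then univ else ∅)

theorem isRDF_minRDF (x : Fin m) : IsRDF (middleGraph (_root_.starGraph m)) 3 (minRDF x) := by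
  rintro (v | e) hw c
  · have hv : v = 0 ∨ v = x.succ := by
      by_contra hv
      simp [minRDF, hv] at hw
    refine ⟨.inr (edge x), ?_, by simp [minRDF]⟩
    rcases hv with rfl | rfl
    · exact Sym2.mem_mk_left _ _
    · exact Sym2.mem_mk_right _ _
  · have he : e ≠ edge x := by
      rintro rfl
      exact univ_nonempty.ne_empty (by simpa [minRDF] using hw)
    exact ⟨.inr (edge x), ⟨he, 0, zero_mem_edge e, zero_mem_edge _⟩, by simp [minRDF]⟩

variable [Fintype (_root_.starGraph m).edgeSet]

theorem rdfWeight_eq (f : Fin (m + 1) ⊕ (_root_.starGraph m).edgeSet → Finset (Fin 3)) :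
    rdfWeight f = (f (.inl 0)).card +
      ∑ i : Fin m, ((f (.inl i.succ)).card + (f (.inr (edge i))).card) := by
  rw [rdfWeight, Fintype.sum_sum_type, Fin.sum_univ_succ, sum_add_distrib, add_assoc,
    ← Function.Bijective.sum_comp ⟨edge_injective, edge_surjective⟩ fun e => (f (.inr e)).card]

theorem three_le_sum_card_edge_of_center_eq_empty
    (hf : IsRDF (middleGraph (_root_.starGraph m)) 3 f) (h0 : f (.inl 0) = ∅) :
    3 ≤ ∑ i : Fin m, (f (.inr (edge i))).card := by
  have hcover : ∀ u, (middleGraph (_root_.starGraph m)).Adj (.inl 0) u →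
      u ∉ univ.map .inr → f u = ∅ := by
    rintro (v | e) hu hus
    · exact absurd hu middleGraph_adj_inl_inl
    · simp at hus
  rw [Function.Bijective.sum_comp ⟨edge_injective, edge_surjective⟩ fun e => (f (.inr e)).card]
  simpa using hf.le_sum_card_of_eq_empty h0 _ hcover

theorem add_two_le_rdfWeight [NeZero m] (hf : IsRDF (middleGraph (_root_.starGraph m)) 3 f) :
    m + 2 ≤ rdfWeight f := by
  rw [rdfWeight_eq]
  by_cases hleaf : ∃ i, f (.inl (Fin.succ i)) = ∅
  · obtain ⟨i, hi⟩ := hleaf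
    have h3 := three_le_card_edge_of_leaf_eq_empty hf hi
    have := card_add_le_sum_add_one (one_le_card_leaf_add_card_edge hf) i
    rw [Fintype.card_fin] at this
    omega
  have hL : ∀ i : Fin m, 1 ≤ (f (.inl i.succ)).card := fun i =>
    Nat.pos_of_ne_zero (card_eq_zero.not.mpr fun h => hleaf ⟨i, h⟩)
  have hLsum := card_add_le_sum_add_one hL 0
  rw [Fintype.card_fin] at hLsum
  have := hL 0
  rw [sum_add_distrib]
  by_cases h0 : (f (.inl 0)).card = 0
  · have := three_le_sum_card_edge_of_center_eq_empty hf (card_eq_zero.mp h0)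
    omega
  by_cases hE : ∑ i, (f (.inr (edge i))).card = 0
  · have := three_le_card_center_add_card_leaf hf
      (fun i => card_eq_zero.mp (sum_eq_zero_iff.mp hE i (mem_univ i))) 0
    omega
  omega

theorem rdfWeight_minRDF (x : Fin m) : rdfWeight (minRDF x) = m + 2 := by
  have hpair : ∀ i, (minRDF x (.inl i.succ)).card + (minRDF x (.inr (edge i))).card =
      1 + if i = x then 2 else 0 := by
    intro i
    by_cases hi : i = x <;> simp [minRDF, hi, Fin.succ_ne_zero]
  simp only [rdfWeight_eq, hpair, sum_add_distrib]
  simp [minRDF]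

theorem rdn_middleGraph [NeZero m] : rdn (middleGraph (_root_.starGraph m)) 3 = m + 2 :=
  rdn_eq_of_isRDF_of_le (isRDF_minRDF 0) (rdfWeight_minRDF 0) fun _ hg => add_two_le_rdfWeight hg

end starGraph

/-- For the star `K_{1,n−1}` with `n ≥ 3` vertices, `γ*_{r3} = n + 1`. -/
theorem stmt16 (n : ℕ) (hn : 3 ≤ n) :
    mrdn (_root_.starGraph (n - 1)) 3 = n + 1 := by
  classical
  have : NeZero (n - 1) := ⟨by omega⟩
  exact starGraph.rdn_middleGraph.trans (by omega)
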